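/- arXiv:2004.13496 — 15 statements merged into one kernel-verified Lean document; each statement's English description precedes it below -/
import Mathlib

section
/- Let A be an m×n complex matrix and W an n×m complex matrix, with k = Ind(AW). If X satisfies (AW)^{k+1}XW = (AW)^k, XWAWX = X, and AWX = XWA, then X is unique. -/
open Matrix

/-- The four Penrose equations: `X` is the Moore–Penrose inverse of `A`. -/
def IsMP {p q : ℕ} (A : Matrix (Fin p) (Fin q) ℂ) (X : Matrix (Fin q) (Fin p) ℂ) : Prop :=
  A * X * A = A ∧ X * A * X = X ∧ (A * X)ᴴ = A * X ∧ (X * A)ᴴ = X * A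

/-- `k` is the index of the square matrix `A`: the least `k` with
`rank (A^(k+1)) = rank (A^k)`. -/
def IsIndex {p : ℕ} (A : Matrix (Fin p) (Fin p) ℂ) (k : ℕ) : Prop :=
  (A ^ (k + 1)).rank = (A ^ k).rank ∧ ∀ j < k, (A ^ (j + 1)).rank ≠ (A ^ j).rank

/-- `X` satisfies the Drazin equations for `A` with exponent `k`. -/
def IsDrazin {p : ℕ} (A : Matrix (Fin p) (Fin p) ℂ) (k : ℕ)
    (X : Matrix (Fin p) (Fin p) ℂ) : Prop :=
  A ^ (k + 1) * X = A ^ k ∧ X * A * X = X ∧ A * X = X * A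

/-- `X` satisfies the W-weighted Drazin equations for `A` with exponent `k`. -/
def IsWDrazin {m n : ℕ} (A : Matrix (Fin m) (Fin n) ℂ) (W : Matrix (Fin n) (Fin m) ℂ)
    (k : ℕ) (X : Matrix (Fin m) (Fin n) ℂ) : Prop :=
  (A * W) ^ (k + 1) * X * W = (A * W) ^ k ∧ X * W * A * W * X = X ∧
    A * W * X = X * W * A


section
variable {R : Type*} [Ring R]

lemma pow_absorb (A Z : R) (h1 : Z * A * Z = Z) (h2 : A * Z = Z * A) :
    ∀ j, Z ^ (j + 1) * A ^ j = Z := by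
  intro j
  induction j with
  | zero => simp
  | succ j ih =>
    have key : Z * (Z * A) = Z := by
      rw [← h2, ← mul_assoc, h1]
    calc Z ^ (j + 2) * A ^ (j + 1)
        = Z ^ j * Z * Z * (A * A ^ j) := by rw [pow_succ, pow_succ, pow_succ']
      _ = Z ^ j * (Z * (Z * A)) * A ^ j := by simp only [mul_assoc]
      _ = Z ^ j * Z * A ^ j := by rw [key]
      _ = Z ^ (j + 1) * A ^ j := by rw [pow_succ]
      _ = Z := ih

lemma za_pow (A Z : R) (h1 : Z * A * Z = Z) (j : ℕ) :
    (Z * A) ^ (j + 1) = Z * A := by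
  induction j with
  | zero => simp
  | succ j ih =>
    rw [pow_succ, ih, ← mul_assoc, h1]

lemma az_pow (A Z : R) (h1 : Z * A * Z = Z) (j : ℕ) :
    (A * Z) ^ (j + 1) = A * Z := by
  induction j with
  | zero => simp
  | succ j ih =>
    rw [pow_succ, ih]
    calc A * Z * (A * Z) = A * (Z * A * Z) := by simp only [mul_assoc]
      _ = A * Z := by rw [h1]

lemma drazin_unique' (A Z Z' : R) (k : ℕ)
    (e1 : A ^ (k + 1) * Z = A ^ k) (e2 : Z * A * Z = Z) (e3 : A * Z = Z * A)
    (f1 : A ^ (k + 1) * Z' = A ^ k) (f2 : Z' * A * Z' = Z') (f3 : A * Z' = Z' * A) :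
    Z = Z' := by
  have cZ : Commute A Z := e3
  have cZ' : Commute A Z' := f3
  have hZ : Z = Z * A * Z' := by
    calc Z = Z ^ (k + 1) * A ^ k := (pow_absorb A Z e2 e3 k).symm
      _ = Z ^ (k + 1) * (A ^ (k + 1) * Z') := by rw [f1]
      _ = Z ^ (k + 1) * A ^ (k + 1) * Z' := by rw [mul_assoc]
      _ = (Z * A) ^ (k + 1) * Z' := by rw [cZ.symm.mul_pow]
      _ = Z * A * Z' := by rw [za_pow A Z e2]
  have hZ' : Z' = Z * A * Z' := by
    have g1 : Z * A ^ (k + 1) = A ^ k := by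
      rw [← (cZ.pow_left (k + 1)).eq, e1]
    calc Z' = Z' ^ (k + 1) * A ^ k := (pow_absorb A Z' f2 f3 k).symm
      _ = A ^ k * Z' ^ (k + 1) := (cZ'.symm.pow_pow (k + 1) k).eq
      _ = Z * A ^ (k + 1) * Z' ^ (k + 1) := by rw [g1]
      _ = Z * (A ^ (k + 1) * Z' ^ (k + 1)) := by rw [mul_assoc]
      _ = Z * (A * Z') ^ (k + 1) := by rw [cZ'.mul_pow]
      _ = Z * (A * Z') := by rw [az_pow A Z' f2]
      _ = Z * A * Z' := by rw [mul_assoc]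
  rw [hZ, ← hZ']

end


theorem weighted_drazin_unique {m n : ℕ} (A X Y : Matrix (Fin m) (Fin n) ℂ)
    (W : Matrix (Fin n) (Fin m) ℂ) (k : ℕ) (hk : IsIndex (A * W) k)
    (hX : IsWDrazin A W k X) (hY : IsWDrazin A W k Y) : X = Y := by
  obtain ⟨x1, x2, x3⟩ := hX
  obtain ⟨y1, y2, y3⟩ := hY
  have hXW : (A * W) ^ (k + 1) * (X * W) = (A * W) ^ k := by
    rw [← Matrix.mul_assoc]; exact x1
  have hYW : (A * W) ^ (k + 1) * (Y * W) = (A * W) ^ k := by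
    rw [← Matrix.mul_assoc]; exact y1
  have hX2 : (X * W) * (A * W) * (X * W) = X * W := by
    simpa only [Matrix.mul_assoc] using congrArg (· * W) x2
  have hY2 : (Y * W) * (A * W) * (Y * W) = Y * W := by
    simpa only [Matrix.mul_assoc] using congrArg (· * W) y2
  have hX3 : (A * W) * (X * W) = (X * W) * (A * W) := by
    rw [← Matrix.mul_assoc (A * W) X W, x3, Matrix.mul_assoc]
  have hY3 : (A * W) * (Y * W) = (Y * W) * (A * W) := by
    rw [← Matrix.mul_assoc (A * W) Y W, y3, Matrix.mul_assoc]
  have hZW : X * W = Y * W :=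
    drazin_unique' (A * W) (X * W) (Y * W) k hXW hX2 hX3 hYW hY2 hY3
  calc X = X * W * A * W * X := x2.symm
    _ = Y * W * A * W * X := by rw [hZW]
    _ = Y * W * (A * W * X) := by simp only [Matrix.mul_assoc]
    _ = Y * W * (X * W * A) := by rw [x3]
    _ = Y * W * (X * W) * A := by simp only [Matrix.mul_assoc]
    _ = Y * W * (Y * W) * A := by rw [hZW]
    _ = Y * W * (Y * W * A) := by simp only [Matrix.mul_assoc]
    _ = Y * W * (A * W * Y) := by rw [← y3]
    _ = Y * W * A * W * Y := by simp only [Matrix.mul_assoc]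
    _ = Y := y2
end

section
/- Let A be an m×n complex matrix and W an n×m complex matrix, and let (WA)^d and (AW)^d denote the Drazin inverses of WA and AW. Then A·((WA)^d)² = ((AW)^d)²·A, and this common value is the W-weighted Drazin inverse A^{d,W} of A with respect to W. -/
open Matrix

section Aux
variable {p : ℕ}

lemma IsDrazin.comm {A X : Matrix (Fin p) (Fin p) ℂ} {k : ℕ} (h : IsDrazin A k X) :
    Commute A X := h.2.2

lemma IsDrazin.eq_pow {A X : Matrix (Fin p) (Fin p) ℂ} {k : ℕ} (h : IsDrazin A k X) (j : ℕ) :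
    X = A ^ j * X ^ (j + 1) := by
  induction j with
  | zero => simp
  | succ j ih =>
    have : A ^ (j+1) * X ^ (j+2) = A * (A ^ j * X ^ (j+1)) * X := by
      rw [pow_succ' A, pow_succ X (j+1)]
      rw [Matrix.mul_assoc, Matrix.mul_assoc, Matrix.mul_assoc]
    rw [this, ← ih, h.2.2, h.2.1]

lemma IsDrazin.pow_mul {A X : Matrix (Fin p) (Fin p) ℂ} {k : ℕ} (h : IsDrazin A k X)
    (j : ℕ) (hj : k ≤ j) : A ^ (j + 1) * X = A ^ j := by
  obtain ⟨i, rfl⟩ := Nat.exists_eq_add_of_le hj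
  have e1 : k + i + 1 = i + (k + 1) := by omega
  have e2 : k + i = i + k := by omega
  rw [e1, pow_add A i (k + 1), Matrix.mul_assoc, h.1, ← pow_add, e2]

lemma IsDrazin.left_eq {A X Y : Matrix (Fin p) (Fin p) ℂ} {k l : ℕ}
    (h1 : IsDrazin A k X) (h2 : IsDrazin A l Y) : X = Y * A * X := by
  set j := k + l with hj
  have hA : A ^ j = Y * A ^ (j + 1) := by
    rw [← h2.pow_mul j (by omega), (h2.comm.pow_left (j+1)).eq]
  calc X = A ^ j * X ^ (j + 1) := h1.eq_pow j
    _ = Y * A ^ (j + 1) * X ^ (j + 1) := by rw [← hA]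
    _ = Y * A * (A ^ j * X ^ (j + 1)) := by
        rw [pow_succ' A, Matrix.mul_assoc Y, Matrix.mul_assoc Y, Matrix.mul_assoc A]
    _ = Y * A * X := by rw [← h1.eq_pow j]

lemma IsDrazin.right_eq {A X Y : Matrix (Fin p) (Fin p) ℂ} {k l : ℕ}
    (h1 : IsDrazin A k X) (h2 : IsDrazin A l Y) : X = X * A * Y := by
  set j := k + l with hj
  have hx : X = X ^ (j + 1) * A ^ j := by
    rw [← ((h1.comm.pow_left j).pow_right (j+1)).eq]
    exact h1.eq_pow j
  calc X = X ^ (j + 1) * A ^ j := hx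
    _ = X ^ (j + 1) * (A ^ (j + 1) * Y) := by rw [h2.pow_mul j (by omega)]
    _ = X ^ (j + 1) * A ^ j * (A * Y) := by
        rw [pow_succ A, Matrix.mul_assoc (X ^ (j+1)), Matrix.mul_assoc (A ^ j)]
    _ = X * A * Y := by rw [← hx, Matrix.mul_assoc]

lemma drazin_unique {A X Y : Matrix (Fin p) (Fin p) ℂ} {k l : ℕ}
    (h1 : IsDrazin A k X) (h2 : IsDrazin A l Y) : X = Y :=
  (h1.right_eq h2).trans (h2.left_eq h1).symm

end Aux

lemma swap_powR {m n : ℕ} (A : Matrix (Fin m) (Fin n) ℂ) (W : Matrix (Fin n) (Fin m) ℂ)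
    (j : ℕ) {q : ℕ} (Z : Matrix (Fin n) (Fin q) ℂ) :
    (A * W) ^ j * (A * Z) = A * ((W * A) ^ j * Z) := by
  induction j with
  | zero => simp
  | succ j ih =>
    rw [pow_succ' (A * W) j, Matrix.mul_assoc, ih, Matrix.mul_assoc A W,
      ← Matrix.mul_assoc W A, ← Matrix.mul_assoc (W * A), ← pow_succ']

theorem weighted_drazin_formula {m n : ℕ} (A : Matrix (Fin m) (Fin n) ℂ)
    (W : Matrix (Fin n) (Fin m) ℂ) (k1 k2 : ℕ)
    (D1 : Matrix (Fin n) (Fin n) ℂ) (D2 : Matrix (Fin m) (Fin m) ℂ)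
    (hk1 : IsIndex (W * A) k1) (hk2 : IsIndex (A * W) k2)
    (hD1 : IsDrazin (W * A) k1 D1) (hD2 : IsDrazin (A * W) k2 D2) :
    A * D1 ^ 2 = D2 ^ 2 * A ∧ IsWDrazin A W k2 (A * D1 ^ 2) := by
  have hsq2 : W * A * D1 * D1 = D1 := by rw [hD1.2.2]; exact hD1.2.1
  have key2b : D1 * (D1 * (W * A)) = D1 := by
    rw [← hD1.2.2, ← Matrix.mul_assoc]; exact hD1.2.1
  have key1 : ∀ {q : ℕ} (X : Matrix (Fin n) (Fin q) ℂ),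
      W * (A * (D1 * (D1 * X))) = D1 * X := by
    intro q X
    rw [← Matrix.mul_assoc W A, ← Matrix.mul_assoc (W * A) D1,
      ← Matrix.mul_assoc (W * A * D1) D1, hsq2]
  have key2 : ∀ {q : ℕ} (Y : Matrix (Fin n) (Fin q) ℂ),
      D1 * (D1 * (W * (A * Y))) = D1 * Y := by
    intro q Y
    rw [← Matrix.mul_assoc W A, ← Matrix.mul_assoc D1 (W * A),
      ← Matrix.mul_assoc D1 (D1 * (W * A)), key2b]
  have key1b : W * (A * (D1 * D1)) = D1 := by
    rw [← Matrix.mul_assoc W A, ← Matrix.mul_assoc (W * A) D1, hsq2]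
  -- A * D1^2 * W satisfies the Drazin equations for A*W with exponent k1+1
  have hX : IsDrazin (A * W) (k1 + 1) (A * D1 ^ 2 * W) := by
    refine ⟨?_, ?_, ?_⟩
    · -- (A*W)^(k1+2) * (A*D1^2*W) = (A*W)^(k1+1)
      have eR : (W * A) ^ (k1 + 1 + 1) * (D1 * (D1 * W)) = (W * A) ^ k1 * W := by
        rw [pow_succ (W * A) (k1 + 1), Matrix.mul_assoc,
          ← Matrix.mul_assoc (W * A) D1, ← Matrix.mul_assoc (W * A * D1) D1, hsq2,
          ← Matrix.mul_assoc, hD1.1]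
      simp only [pow_two, Matrix.mul_assoc]
      rw [swap_powR, eR, ← swap_powR A W k1 W, ← pow_succ]
    · -- X * (A*W) * X = X
      simp only [pow_two, Matrix.mul_assoc]
      rw [key1 W, key2 (D1 * W)]
    · -- commute
      simp only [pow_two, Matrix.mul_assoc]
      rw [key1 W, key2 W]
  have hD2eq : D2 = A * D1 ^ 2 * W := drazin_unique hD2 hX
  have hDA : D2 * A = A * D1 := by
    rw [hD2eq]
    simp only [pow_two, Matrix.mul_assoc]
    rw [key2b]
  have hmain : A * D1 ^ 2 = D2 ^ 2 * A := by
    rw [pow_two D2, Matrix.mul_assoc, hDA, ← Matrix.mul_assoc, hDA,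
      Matrix.mul_assoc, ← pow_two]
  refine ⟨hmain, ?_, ?_, ?_⟩
  · -- (A*W)^(k2+1) * (A*D1^2) * W = (A*W)^k2
    have hD2R : A * (D1 * (D1 * W)) = D2 := by
      rw [hD2eq]; simp only [pow_two, Matrix.mul_assoc]
    simp only [pow_two, Matrix.mul_assoc]
    rw [hD2R, hD2.1]
  · -- X*W*A*W*X = X
    simp only [pow_two, Matrix.mul_assoc]
    rw [key1b, key2 D1]
  · -- A*W*X = X*W*A
    simp only [pow_two, Matrix.mul_assoc]
    rw [key1b, key2b]
end

section
/- Let A be an n×n complex matrix with index k and Drazin inverse A^d, Moore-Penrose inverse A†, and let l ≥ k be a nonnegative integer. Then X = A^d A^l (A^l)† satisfies: X A^{k+1} = A^k, A X² = X, and (AX)ᴴ = AX. -/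
open Matrix

theorem core_ep_props {p : ℕ} (A D P : Matrix (Fin p) (Fin p) ℂ) (k l : ℕ)
    (hk : IsIndex A k) (hl : k ≤ l) (hD : IsDrazin A k D) (hP : IsMP (A ^ l) P) :
    (D * A ^ l * P) * A ^ (k + 1) = A ^ k ∧
    A * (D * A ^ l * P) ^ 2 = D * A ^ l * P ∧
    (A * (D * A ^ l * P))ᴴ = A * (D * A ^ l * P) := by
  obtain ⟨h1, h2, h3⟩ := hD
  obtain ⟨hp1, hp2, hp3, hp4⟩ := hP
  have hcomm : ∀ n : ℕ, A ^ n * D = D * A ^ n := by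
    intro n
    induction n with
    | zero => simp
    | succ m ih =>
        rw [pow_succ, mul_assoc, h3, ← mul_assoc, ih, mul_assoc, ← pow_succ]
  have key : ∀ m, k ≤ m → A ^ (m + 1) * D = A ^ m := by
    intro m hm
    obtain ⟨j, rfl⟩ := Nat.exists_eq_add_of_le hm
    calc A ^ (k + j + 1) * D = A ^ j * (A ^ (k + 1) * D) := by
          rw [← mul_assoc, ← pow_add]; ring_nf
      _ = A ^ j * A ^ k := by rw [h1]
      _ = A ^ (k + j) := by rw [← pow_add]; ring_nf
  have key2 : ∀ j, A ^ (k + j + 1) * D ^ j = A ^ (k + 1) := by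
    intro j
    induction j with
    | zero => simp
    | succ n ih =>
        calc A ^ (k + (n + 1) + 1) * D ^ (n + 1)
            = (A ^ (k + n + 1 + 1) * D) * D ^ n := by
              rw [pow_succ' D, ← mul_assoc]
              ring_nf
          _ = A ^ (k + n + 1) * D ^ n := by
              rw [key (k + n + 1) (by omega)]
          _ = A ^ (k + 1) := ih
  obtain ⟨j, rfl⟩ := Nat.exists_eq_add_of_le hl
  have hADD : A * D * D = D := by
    rw [h3, mul_assoc, ← mul_assoc, h2]
  have hAkj : A ^ (k + 1) = A ^ (k + j) * (A * D ^ j) := by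
    rw [← mul_assoc, ← pow_succ, key2]
  have inner : A ^ (k + j) * P * D * A ^ (k + j) = A ^ (k + j) * D := by
    rw [mul_assoc (A ^ (k + j) * P), ← hcomm, ← mul_assoc, hp1]
  refine ⟨?_, ?_, ?_⟩
  · calc D * A ^ (k + j) * P * A ^ (k + 1)
        = D * (A ^ (k + j) * P * A ^ (k + j)) * (A * D ^ j) := by
          rw [hAkj]; simp only [mul_assoc]
      _ = D * A ^ (k + j) * (A * D ^ j) := by rw [hp1]
      _ = D * (A ^ (k + j + 1) * D ^ j) := by
          simp only [pow_succ, mul_assoc]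
      _ = D * A ^ (k + 1) := by rw [key2]
      _ = A ^ (k + 1) * D := (hcomm _).symm
      _ = A ^ k := key k le_rfl
  · rw [pow_two]
    calc A * (D * A ^ (k + j) * P * (D * A ^ (k + j) * P))
        = A * (D * (A ^ (k + j) * P * D * A ^ (k + j)) * P) := by
          simp only [mul_assoc]
      _ = A * (D * (A ^ (k + j) * D) * P) := by rw [inner]
      _ = A * (D * (D * A ^ (k + j)) * P) := by rw [hcomm]
      _ = (A * D * D) * (A ^ (k + j) * P) := by simp only [mul_assoc]
      _ = D * A ^ (k + j) * P := by rw [hADD, mul_assoc]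
  · have hx : A * (D * A ^ (k + j) * P) = A ^ (k + j) * P := by
      have h : A * (D * A ^ (k + j)) = A ^ (k + j) := by
        rw [← hcomm, ← mul_assoc, ← pow_succ']
        exact key (k + j) (by omega)
      rw [← mul_assoc A (D * A ^ (k + j)) P, h]
    rw [hx, hp3]
end

section
/- Let A be an n×n complex matrix with index k, and let l ≥ k. Then X = (A^l)† A^l A^d satisfies A^{k+1} X = A^k, X² A = X, and (XA)ᴴ = XA. -/
open Matrix

theorem left_core_ep_props {p : ℕ} (A D P : Matrix (Fin p) (Fin p) ℂ) (k l : ℕ)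
    (hk : IsIndex A k) (hl : k ≤ l) (hD : IsDrazin A k D) (hP : IsMP (A ^ l) P) :
    A ^ (k + 1) * (P * A ^ l * D) = A ^ k ∧
    (P * A ^ l * D) ^ 2 * A = P * A ^ l * D ∧
    ((P * A ^ l * D) * A)ᴴ = (P * A ^ l * D) * A := by
  obtain ⟨h1, h2, h3⟩ := hD
  obtain ⟨m1, m2, _, m4⟩ := hP
  have hc : Commute A D := h3
  have hA : ∀ j, A ^ (k + 1 + j) * D = A ^ (k + j) := by
    intro j
    rw [show k + 1 + j = j + (k + 1) by omega, pow_add, mul_assoc, h1, ← pow_add,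
      add_comm]
  have hdown : ∀ j, A ^ (k + j) * D ^ j = A ^ k := by
    intro j
    induction j with
    | zero => simp
    | succ n ih =>
      rw [pow_succ', ← mul_assoc, show k + (n + 1) = k + 1 + n by omega, hA n, ih]
  have hDD : D * (D * A) = D := by rw [← h3, ← mul_assoc, h2]
  have hDrep : ∀ m, D ^ (m + 1) * A ^ m = D := by
    intro m
    induction m with
    | zero => simp
    | succ n ih =>
      rw [pow_succ' D, pow_succ A, mul_assoc D, ← mul_assoc (D ^ (n + 1)), ih, hDD]
  have m1' : ∀ X : Matrix (Fin p) (Fin p) ℂ, X * A ^ l * P * A ^ l = X * A ^ l := by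
    intro X
    rw [mul_assoc, mul_assoc, ← mul_assoc (A ^ l), m1]
  have hAlD : A ^ l * D * A = A ^ l := by
    rw [mul_assoc, ← h3, ← mul_assoc, ← pow_succ,
      show l + 1 = k + 1 + (l - k) by omega, hA, show k + (l - k) = l by omega]
  have hXA : P * A ^ l * D * A = P * A ^ l := by
    rw [mul_assoc, mul_assoc, ← mul_assoc (A ^ l), hAlD]
  have e1 : A ^ (l + 1) * D ^ (l - k + 1) = A ^ k := by
    have := hdown (l - k + 1)
    rwa [show k + (l - k + 1) = l + 1 by omega] at this
  have e2 : A ^ (l + 1) * D ^ (l - k) = A ^ (k + 1) := by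
    have h := hdown (l - k)
    rw [show k + (l - k) = l by omega] at h
    rw [pow_succ', mul_assoc, h, ← pow_succ']
  have hk1 : A ^ (k + 1) = D ^ (l - k) * A ^ (l + 1) := by
    rw [← e2, (hc.pow_pow (l + 1) (l - k)).eq]
  refine ⟨?_, ?_, ?_⟩
  · rw [hk1, pow_succ']
    simp only [← mul_assoc]
    rw [m1' (D ^ (l - k) * A), mul_assoc (D ^ (l - k)), ← pow_succ',
      ← (hc.pow_pow (l + 1) (l - k)).eq, mul_assoc, ← pow_succ]
    exact e1
  · rw [pow_two, mul_assoc, hXA, ← hDrep l]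
    simp only [← mul_assoc]
    exact m1' _
  · rw [hXA, m4]
end

section
/- Let A be an n×n complex matrix with index k. Any matrix X satisfying A^{k+1}X = A^k, X²A = X, (XA)ᴴ = XA, and row space of X contained in the row space of A^k is unique; i.e., if X and Y both satisfy these conditions then X = Y. -/
open Matrix

private lemma pow_mul_pow_eq {p : ℕ} (A X : Matrix (Fin p) (Fin p) ℂ)
    (h2 : X ^ 2 * A = X) : ∀ m : ℕ, X ^ (m + 1) * A ^ m = X := by
  intro m
  induction m with
  | zero => simp
  | succ n ih =>
    have hstep : X ^ (n + 2) * A = X ^ (n + 1) := by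
      calc X ^ (n + 2) * A = X ^ n * (X ^ 2 * A) := by
            rw [← mul_assoc, ← pow_add]
      _ = X ^ n * X := by rw [h2]
      _ = X ^ (n + 1) := by rw [← pow_succ]
    calc X ^ (n + 2) * A ^ (n + 1) = X ^ (n + 2) * (A * A ^ n) := by
          rw [pow_succ' A n]
    _ = (X ^ (n + 2) * A) * A ^ n := by rw [mul_assoc]
    _ = X ^ (n + 1) * A ^ n := by rw [hstep]
    _ = X := ih

theorem left_core_ep_unique {p : ℕ} (A X Y : Matrix (Fin p) (Fin p) ℂ) (k : ℕ)
    (hk : IsIndex A k)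
    (hX : A ^ (k + 1) * X = A ^ k ∧ X ^ 2 * A = X ∧ (X * A)ᴴ = X * A ∧
      ∃ M, X = M * A ^ k)
    (hY : A ^ (k + 1) * Y = A ^ k ∧ Y ^ 2 * A = Y ∧ (Y * A)ᴴ = Y * A ∧
      ∃ M, Y = M * A ^ k) : X = Y := by
  obtain ⟨h1X, h2X, h3X, -⟩ := hX
  obtain ⟨h1Y, h2Y, h3Y, -⟩ := hY
  have eX : X ^ (k + 1) * A ^ k = X := pow_mul_pow_eq A X h2X k
  have eY : Y ^ (k + 1) * A ^ k = Y := pow_mul_pow_eq A Y h2Y k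
  have hXA : X * A = X ^ (k + 1) * A ^ (k + 1) := by
    calc X * A = (X ^ (k + 1) * A ^ k) * A := by rw [eX]
    _ = X ^ (k + 1) * A ^ (k + 1) := by rw [mul_assoc, ← pow_succ]
  have hYA : Y * A = Y ^ (k + 1) * A ^ (k + 1) := by
    calc Y * A = (Y ^ (k + 1) * A ^ k) * A := by rw [eY]
    _ = Y ^ (k + 1) * A ^ (k + 1) := by rw [mul_assoc, ← pow_succ]
  -- X * A * Y = X, and symmetric identities
  have hXAY : X * A * Y = X := by
    calc X * A * Y = X ^ (k + 1) * (A ^ (k + 1) * Y) := by rw [hXA, mul_assoc]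
    _ = X ^ (k + 1) * A ^ k := by rw [h1Y]
    _ = X := eX
  have hYAX : Y * A * X = Y := by
    calc Y * A * X = Y ^ (k + 1) * (A ^ (k + 1) * X) := by rw [hYA, mul_assoc]
    _ = Y ^ (k + 1) * A ^ k := by rw [h1X]
    _ = Y := eY
  have hYAY : Y * A * Y = Y := by
    calc Y * A * Y = Y ^ (k + 1) * (A ^ (k + 1) * Y) := by rw [hYA, mul_assoc]
    _ = Y ^ (k + 1) * A ^ k := by rw [h1Y]
    _ = Y := eY
  -- (X*A)*(Y*A) = X*A  and  (Y*A)*(X*A) = Y*A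
  have e1 : (X * A) * (Y * A) = X * A := by
    calc (X * A) * (Y * A) = (X * A * Y) * A := by
          simp only [mul_assoc]
    _ = X * A := by rw [hXAY]
  have e2 : (Y * A) * (X * A) = Y * A := by
    calc (Y * A) * (X * A) = (Y * A * X) * A := by
          simp only [mul_assoc]
    _ = Y * A := by rw [hYAX]
  have key : X * A = Y * A := by
    calc X * A = (X * A)ᴴ := h3X.symm
    _ = ((X * A) * (Y * A))ᴴ := by rw [e1]
    _ = (Y * A)ᴴ * (X * A)ᴴ := by rw [conjTranspose_mul]
    _ = (Y * A) * (X * A) := by rw [h3X, h3Y]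
    _ = Y * A := e2
  calc X = X * A * Y := hXAY.symm
  _ = Y * A * Y := by rw [key]
  _ = Y := hYAY
end

section
/- Let A ∈ ℂ^{m×n}, W ∈ ℂ^{n×m}, k = max{Ind(WA), Ind(AW)}, and let (AW)_{⊕} denote the left core-EP inverse of AW. Then X = ((AW)_{⊕})² A satisfies X W A W = ((AW)^k)† (AW)^k. -/
open Matrix

theorem left_weighted_core_ep_eq {m n : ℕ} (A : Matrix (Fin m) (Fin n) ℂ)
    (W : Matrix (Fin n) (Fin m) ℂ) (kWA kAW k : ℕ)
    (hkWA : IsIndex (W * A) kWA) (hkAW : IsIndex (A * W) kAW)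
    (hk : k = max kWA kAW)
    (D P : Matrix (Fin m) (Fin m) ℂ)
    (hD : IsDrazin (A * W) k D) (hP : IsMP ((A * W) ^ k) P) :
    ((P * (A * W) ^ k * D) ^ 2 * A) * W * A * W = P * (A * W) ^ k := by
  obtain ⟨hD1, hD2, hD3⟩ := hD
  obtain ⟨hP1, hP2, hP3, hP4⟩ := hP
  have hc : Commute (A * W) D := hD3
  have hck : ∀ j : ℕ, D * (A * W) ^ j = (A * W) ^ j * D :=
    fun j => ((hc.symm).pow_right j).eq
  have h1 : D * (A * W) ^ (k + 1) = (A * W) ^ k := by rw [hck, hD1]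
  have h2 : D * (A * W) ^ (k + 2) = (A * W) ^ (k + 1) := by
    rw [pow_succ, ← mul_assoc, h1, ← pow_succ]
  have hkey : (A * W) ^ k * D * (A * W * (A * W)) = (A * W) ^ (k + 1) := by
    rw [← hck k, mul_assoc, ← mul_assoc ((A*W)^k), ← pow_succ, ← pow_succ, h2]
  calc ((P * (A * W) ^ k * D) ^ 2 * A) * W * A * W
      = P * (A * W) ^ k * D * P * ((A * W) ^ k * D * (A * W * (A * W))) := by
        rw [pow_two]; simp only [Matrix.mul_assoc]
    _ = P * (A * W) ^ k * D * P * (A * W) ^ (k + 1) := by rw [hkey]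
    _ = P * ((A * W) ^ k * D) * (P * (A * W) ^ k * (A * W)) := by
        rw [pow_succ]; simp only [Matrix.mul_assoc]
    _ = P * (D * ((A * W) ^ k * P * (A * W) ^ k * (A * W))) := by
        rw [← hck k]; simp only [Matrix.mul_assoc]
    _ = P * (D * ((A * W) ^ k * (A * W))) := by rw [hP1]
    _ = P * (A * W) ^ k := by rw [← pow_succ, h1]
end

section
/- Let A ∈ ℂ^{m×n}, W ∈ ℂ^{n×m}, k = max{Ind(WA), Ind(AW)}, and M_{⊕} the left core-EP inverse of M = AW. Then X = (M_{⊕})² A satisfies the three equations: (WA)^{k+1}WX = (WA)^k, XWXWA = X, and (XWAW)ᴴ = XWAW. -/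
open Matrix

/-!
Write `M = A W`, `N = W A`, and `E = P M^k D` for the left core-EP inverse of `M`. The Drazin and
Penrose equations give `E M = P M^k`, hence `E² M = E` and `M^(k+1) E² = M^k D`. From these the
second and third equations for `X = E² A` follow, the third because `X W A W = E M = P M^k`
is Hermitian. For the first, `N^(k+1) W X = W M^k D A`; once `k` is at least the index of `N`, the
row spaces of `N^k` and `N^(k+1)` coincide, so `N^k = B N^(k+1)`, and
`N^(k+1) W D A = W M^(k+1) D A = N^(k+1)` gives `W M^k D A = N^k W D A = N^k`.
-/
namespace Matrix

variable {l m n R K : Type*}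

theorem exists_eq_mul_of_range_mulVecLin_le [Fintype m] [Fintype n] [DecidableEq n]
    [CommSemiring R] {U : Matrix l m R} {V : Matrix l n R}
    (h : LinearMap.range V.mulVecLin ≤ LinearMap.range U.mulVecLin) :
    ∃ B : Matrix m n R, V = U * B := by
  choose b hb using fun j => h ⟨Pi.single j 1, rfl⟩
  refine ⟨(of b)ᵀ, ext fun i j => ?_⟩
  have hcol := congrFun (hb j) i
  simp only [mulVecLin_apply, mulVec_single_one, col_apply] at hcol
  rw [← hcol]
  rfl

theorem exists_eq_mul_mul_of_rank_mul_eq [Fintype l] [Fintype m] [Fintype n] [DecidableEq m]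
    [Field K] {U : Matrix l m K} {V : Matrix m n K} (h : (U * V).rank = V.rank) :
    ∃ B : Matrix m l K, V = B * (U * V) := by
  have hle : LinearMap.range (U * V)ᵀ.mulVecLin ≤ LinearMap.range Vᵀ.mulVecLin := by
    rw [transpose_mul, mulVecLin_mul]
    exact LinearMap.range_comp_le_range _ _
  have hrange : LinearMap.range (U * V)ᵀ.mulVecLin = LinearMap.range Vᵀ.mulVecLin :=
    Submodule.eq_of_le_of_finrank_le hle <| by
      change Vᵀ.rank ≤ (U * V)ᵀ.rank
      rw [rank_transpose, rank_transpose, h]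
  obtain ⟨B, hB⟩ := exists_eq_mul_of_range_mulVecLin_le hrange.ge
  refine ⟨Bᵀ, ?_⟩
  conv_lhs => rw [← transpose_transpose V, hB]
  rw [transpose_mul, transpose_transpose]

theorem exists_pow_eq_mul_pow_succ [Fintype n] [DecidableEq n] [Field K] {N : Matrix n n K}
    {j i : ℕ} (h : (N ^ (j + 1)).rank = (N ^ j).rank) (hji : j ≤ i) :
    ∃ B : Matrix n n K, N ^ i = B * N ^ (i + 1) := by
  rw [pow_succ'] at h
  obtain ⟨B, hB⟩ := exists_eq_mul_mul_of_rank_mul_eq h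
  obtain ⟨d, rfl⟩ := Nat.exists_eq_add_of_le hji
  refine ⟨B, ?_⟩
  rw [pow_add, hB, Matrix.mul_assoc, Matrix.mul_assoc, ← pow_add, ← pow_succ']

theorem mul_pow_mul [Fintype m] [Fintype n] [DecidableEq m] [DecidableEq n] [Semiring R]
    (W : Matrix n m R) (A : Matrix m n R) (j : ℕ) : (W * A) ^ j * W = W * (A * W) ^ j := by
  induction j with
  | zero => simp
  | succ j ih =>
    rw [pow_succ', Matrix.mul_assoc, ih, pow_succ', ← Matrix.mul_assoc, ← Matrix.mul_assoc,
      Matrix.mul_assoc W]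

theorem mul_pow_mul_mul_eq_pow [Fintype m] [Fintype n] [DecidableEq m] [DecidableEq n]
    [Semiring R] {A : Matrix m n R} {W : Matrix n m R} {D : Matrix m m R} {B : Matrix n n R}
    {k : ℕ} (hD : (A * W) ^ (k + 1) * D = (A * W) ^ k)
    (hB : (W * A) ^ k = B * (W * A) ^ (k + 1)) :
    W * (A * W) ^ k * D * A = (W * A) ^ k :=
  calc W * (A * W) ^ k * D * A = B * (W * ((A * W) ^ (k + 1) * D) * A) := by
        rw [← mul_pow_mul, hB, Matrix.mul_assoc B, mul_pow_mul]
        simp only [Matrix.mul_assoc]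
    _ = (W * A) ^ k := by
        rw [hD, ← mul_pow_mul, Matrix.mul_assoc ((W * A) ^ k), ← pow_succ, ← hB]

end Matrix

section LeftCoreEP

variable {R : Type*} [Monoid R] {M D P : R} {k : ℕ}

/-- The left core-EP inverse `(M ^ k)† M ^ k M^D`, with `D` standing for a Drazin inverse of `M`
and `P` for a Moore–Penrose inverse of `M ^ k`. -/
def leftCoreEP (k : ℕ) (M D P : R) : R :=
  P * M ^ k * D

theorem pow_succ_mul_pow_eq_self_of_mul_mul_eq (hD : D * M * D = D) (hMD : M * D = D * M)
    (j : ℕ) : D ^ (j + 1) * M ^ j = D := by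
  have hDDM : D * D * M = D := by rw [mul_assoc, ← hMD, ← mul_assoc, hD]
  induction j with
  | zero => simp
  | succ j ih =>
    calc D ^ (j + 1 + 1) * M ^ (j + 1) = D ^ j * (D * D * M) * M ^ j := by
          rw [pow_succ, pow_succ, pow_succ']; simp only [mul_assoc]
      _ = D := by rw [hDDM, ← pow_succ, ih]

theorem leftCoreEP_mul (hD : M ^ (k + 1) * D = M ^ k) (hMD : M * D = D * M) :
    leftCoreEP k M D P * M = P * M ^ k := by
  rw [leftCoreEP, mul_assoc, ← hMD, ← mul_assoc, mul_assoc P, ← pow_succ, mul_assoc P, hD]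

theorem pow_succ_mul_leftCoreEP_sq (hD : M ^ (k + 1) * D = M ^ k)
    (hP : M ^ k * P * M ^ k = M ^ k) : M ^ (k + 1) * leftCoreEP k M D P ^ 2 = M ^ k * D := by
  set E := leftCoreEP k M D P with hE
  have hMkE : M ^ k * E = M ^ k * D := by
    rw [hE, leftCoreEP, ← mul_assoc, ← mul_assoc, hP]
  calc M ^ (k + 1) * E ^ 2 = M * (M ^ k * E) * E := by rw [sq, pow_succ']; simp only [mul_assoc]
    _ = M ^ (k + 1) * D * E := by rw [hMkE, ← mul_assoc, ← pow_succ']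
    _ = M ^ k * D := by rw [hD, hMkE]

theorem leftCoreEP_sq_mul (hD : M ^ (k + 1) * D = M ^ k) (hDMD : D * M * D = D)
    (hMD : M * D = D * M) (hP : M ^ k * P * M ^ k = M ^ k) :
    leftCoreEP k M D P ^ 2 * M = leftCoreEP k M D P := by
  have hDPM : D * (P * M ^ k) = D :=
    calc D * (P * M ^ k) = D ^ (k + 1) * (M ^ k * P * M ^ k) := by
          conv_lhs => rw [← pow_succ_mul_pow_eq_self_of_mul_mul_eq hDMD hMD k]
          simp only [mul_assoc]
      _ = D := by rw [hP, pow_succ_mul_pow_eq_self_of_mul_mul_eq hDMD hMD k]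
  rw [sq, mul_assoc, leftCoreEP_mul hD hMD, leftCoreEP, mul_assoc, hDPM]

end LeftCoreEP

theorem left_weighted_core_ep_props_general {m n : ℕ} (A : Matrix (Fin m) (Fin n) ℂ)
    (W : Matrix (Fin n) (Fin m) ℂ) (kWA kAW k : ℕ)
    (hkWA : IsIndex (W * A) kWA)
    (hk : k = max kWA kAW)
    (D P : Matrix (Fin m) (Fin m) ℂ)
    (hD : IsDrazin (A * W) k D) (hP : IsMP ((A * W) ^ k) P) :
    (W * A) ^ (k + 1) * W * ((P * (A * W) ^ k * D) ^ 2 * A) = (W * A) ^ k ∧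
    ((P * (A * W) ^ k * D) ^ 2 * A) * W * ((P * (A * W) ^ k * D) ^ 2 * A) * W * A =
      (P * (A * W) ^ k * D) ^ 2 * A ∧
    (((P * (A * W) ^ k * D) ^ 2 * A) * W * A * W)ᴴ =
      ((P * (A * W) ^ k * D) ^ 2 * A) * W * A * W := by
  obtain ⟨hD₁, hD₂, hD₃⟩ := hD
  obtain ⟨hP₁, -, -, hP₄⟩ := hP
  obtain ⟨B, hB⟩ := Matrix.exists_pow_eq_mul_pow_succ hkWA.1 (hk ▸ le_max_left kWA kAW)
  rw [show P * (A * W) ^ k * D = leftCoreEP k (A * W) D P from rfl]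
  set E := leftCoreEP k (A * W) D P
  have hE : E ^ 2 * (A * W) = E := leftCoreEP_sq_mul hD₁ hD₂ hD₃ hP₁
  refine ⟨?_, ?_, ?_⟩
  · calc (W * A) ^ (k + 1) * W * (E ^ 2 * A) = W * ((A * W) ^ (k + 1) * E ^ 2) * A := by
          rw [Matrix.mul_pow_mul]; simp only [Matrix.mul_assoc]
      _ = (W * A) ^ k := by
          rw [pow_succ_mul_leftCoreEP_sq hD₁ hP₁, ← Matrix.mul_assoc]
          exact Matrix.mul_pow_mul_mul_eq_pow hD₁ hB
  · calc E ^ 2 * A * W * (E ^ 2 * A) * W * A = E ^ 2 * (A * W) * (E ^ 2 * (A * W)) * A := by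
          simp only [Matrix.mul_assoc]
      _ = E ^ 2 * A := by rw [hE, ← sq]
  · have hXWAW : E ^ 2 * A * W * A * W = P * (A * W) ^ k :=
      calc E ^ 2 * A * W * A * W = E ^ 2 * (A * W) * (A * W) := by simp only [Matrix.mul_assoc]
        _ = P * (A * W) ^ k := by rw [hE, leftCoreEP_mul hD₁ hD₃]
    rw [hXWAW, hP₄]

theorem left_weighted_core_ep_props {m n : ℕ} (A : Matrix (Fin m) (Fin n) ℂ)
    (W : Matrix (Fin n) (Fin m) ℂ) (kWA kAW k : ℕ)
    (hkWA : IsIndex (W * A) kWA) (hkAW : IsIndex (A * W) kAW)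
    (hk : k = max kWA kAW)
    (D P : Matrix (Fin m) (Fin m) ℂ)
    (hD : IsDrazin (A * W) k D) (hP : IsMP ((A * W) ^ k) P) :
    (W * A) ^ (k + 1) * W * ((P * (A * W) ^ k * D) ^ 2 * A) = (W * A) ^ k ∧
    ((P * (A * W) ^ k * D) ^ 2 * A) * W * ((P * (A * W) ^ k * D) ^ 2 * A) * W * A =
      (P * (A * W) ^ k * D) ^ 2 * A ∧
    (((P * (A * W) ^ k * D) ^ 2 * A) * W * A * W)ᴴ =
      ((P * (A * W) ^ k * D) ^ 2 * A) * W * A * W :=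
  left_weighted_core_ep_props_general A W kWA kAW k hkWA hk D P hD hP
end

section
/- Let A ∈ ℂ^{m×n}, W ∈ ℂ^{n×m}, k = max{Ind(WA), Ind(AW)}. If X and Y each satisfy (WA)^{k+1}WX = (WA)^k, XWXWA = X, and (XWAW)ᴴ = XWAW, then X = Y. That is, the solution to this system is unique. -/
open Matrix

theorem left_weighted_core_ep_unique {m n : ℕ} (A X Y : Matrix (Fin m) (Fin n) ℂ)
    (W : Matrix (Fin n) (Fin m) ℂ) (kWA kAW k : ℕ)
    (hkWA : IsIndex (W * A) kWA) (hkAW : IsIndex (A * W) kAW)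
    (hk : k = max kWA kAW)
    (hX : (W * A) ^ (k + 1) * W * X = (W * A) ^ k ∧ X * W * X * W * A = X ∧
      (X * W * A * W)ᴴ = X * W * A * W)
    (hY : (W * A) ^ (k + 1) * W * Y = (W * A) ^ k ∧ Y * W * Y * W * A = Y ∧
      (Y * W * A * W)ᴴ = Y * W * A * W) : X = Y := by
  obtain ⟨hX1, hX2, hX3⟩ := hX
  obtain ⟨hY1, hY2, hY3⟩ := hY
  have key : ∀ (Z : Matrix (Fin m) (Fin n) ℂ), Z * W * Z * W * A = Z →
      ∀ j : ℕ, (Z * W) ^ j * Z * (W * A) ^ j = Z := by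
    intro Z hZ j
    induction j with
    | zero => simp
    | succ j ih =>
      have h : (Z * W) ^ (j + 1) * Z * (W * A) ^ (j + 1)
          = (Z * W) ^ j * (Z * W * Z * W * A) * (W * A) ^ j := by
        rw [pow_succ, pow_succ']
        simp only [Matrix.mul_assoc]
      rw [h, hZ, ih]
  have cross : ∀ (Z Z' : Matrix (Fin m) (Fin n) ℂ),
      Z * W * Z * W * A = Z →
      (W * A) ^ (k + 1) * W * Z' = (W * A) ^ k →
      Z = Z * W * A * W * Z' := by
    intro Z Z' hZ h1
    have hkey := key Z hZ
    have h4 : (Z * W) ^ k * Z * (W * A) ^ (k + 1) = Z * (W * A) := by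
      rw [pow_succ, ← Matrix.mul_assoc, hkey k]
    calc Z = (Z * W) ^ k * Z * (W * A) ^ k := (hkey k).symm
      _ = (Z * W) ^ k * Z * ((W * A) ^ (k + 1) * W * Z') := by rw [h1]
      _ = (Z * W) ^ k * Z * (W * A) ^ (k + 1) * W * Z' := by
          simp only [Matrix.mul_assoc]
      _ = Z * (W * A) * W * Z' := by rw [h4]
      _ = Z * W * A * W * Z' := by simp only [Matrix.mul_assoc]
  have eXY : X = X * W * A * W * Y := cross X Y hX2 hY1
  have eYX : Y = Y * W * A * W * X := cross Y X hY2 hX1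
  have hPQ : X * W * A * W * (Y * W * A * W) = X * W * A * W := by
    conv_rhs => rw [eXY]
    simp only [Matrix.mul_assoc]
  have hQP : Y * W * A * W * (X * W * A * W) = Y * W * A * W := by
    conv_rhs => rw [eYX]
    simp only [Matrix.mul_assoc]
  have hPeqQ : X * W * A * W = Y * W * A * W := by
    calc X * W * A * W = (X * W * A * W)ᴴ := hX3.symm
      _ = (X * W * A * W * (Y * W * A * W))ᴴ := by rw [hPQ]
      _ = (Y * W * A * W)ᴴ * (X * W * A * W)ᴴ := conjTranspose_mul _ _
      _ = Y * W * A * W * (X * W * A * W) := by rw [hX3, hY3]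
      _ = Y * W * A * W := hQP
  calc X = X * W * A * W * Y := eXY
    _ = X * W * A * W * (Y * W * A * W * X) := by
        conv_lhs => rw [eYX]
    _ = X * W * A * W * (Y * W * A * W) * X := by
        simp only [Matrix.mul_assoc]
    _ = X * W * A * W * X := by rw [hPQ]
    _ = Y * W * A * W * X := by rw [hPeqQ]
    _ = Y := eYX.symm
end

section
/- Let A be an n×n complex matrix with index k, A† its Moore-Penrose inverse and A^d its Drazin inverse. Then X = A^d A A† satisfies: XAX = X, XA = A^d A, and A^k X = A^k A†. -/
open Matrix

theorem dmp_props {p : ℕ} (A D P : Matrix (Fin p) (Fin p) ℂ) (k : ℕ)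
    (hk : IsIndex A k) (hD : IsDrazin A k D) (hP : IsMP A P) :
    (D * A * P) * A * (D * A * P) = D * A * P ∧
    (D * A * P) * A = D * A ∧
    A ^ k * (D * A * P) = A ^ k * P := by
  obtain ⟨h1, h2, h3⟩ := hD
  obtain ⟨p1, _, _, _⟩ := hP
  have hXA : D * A * P * A = D * A := by
    rw [mul_assoc (D * A), mul_assoc D, ← mul_assoc A, p1]
  refine ⟨?_, hXA, ?_⟩
  · rw [hXA, ← mul_assoc, ← mul_assoc (D * A) D A, h2]
  · calc A ^ k * (D * A * P) = A ^ k * D * A * P := by rw [← mul_assoc, ← mul_assoc]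
      _ = A ^ k * (A * D) * P := by rw [mul_assoc (A ^ k), h3]
      _ = A ^ (k + 1) * D * P := by rw [← mul_assoc, ← pow_succ]
      _ = A ^ k * P := by rw [h1]
end

section
/- Let A be an n×n complex matrix with index k. If X and Y both satisfy XAX = X, XA = A^d A, and A^k X = A^k A†, then X = Y; the unique solution is A^d A A†. -/
open Matrix

theorem dmp_unique {p : ℕ} (A D P X Y : Matrix (Fin p) (Fin p) ℂ) (k : ℕ)
    (hk : IsIndex A k) (hD : IsDrazin A k D) (hP : IsMP A P)
    (hX : X * A * X = X ∧ X * A = D * A ∧ A ^ k * X = A ^ k * P)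
    (hY : Y * A * Y = Y ∧ Y * A = D * A ∧ A ^ k * Y = A ^ k * P) :
    X = Y ∧ X = D * A * P := by
  obtain ⟨-, hDAD, hc⟩ := hD
  have hDDA : D * D * A = D := by rw [mul_assoc, ← hc, ← mul_assoc, hDAD]
  have key : ∀ j : ℕ, D ^ (j + 1) * A ^ j = D := by
    intro j
    induction j with
    | zero => simp
    | succ n ih =>
      have e1 : D ^ (n + 2) * A ^ (n + 1) = D ^ n * (D * D * A) * A ^ n := by
        rw [pow_succ, pow_succ, pow_succ' A n]
        simp only [mul_assoc]
      rw [e1, hDDA, ← pow_succ, ih]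
  have swap : ∀ M : Matrix (Fin p) (Fin p) ℂ,
      D ^ (k + 1) * A ^ k * A * M = D ^ (k + 1) * A * (A ^ k * M) := by
    intro M
    rw [mul_assoc (D ^ (k + 1)) (A ^ k) A, pow_mul_comm',
        ← mul_assoc (D ^ (k + 1)) A (A ^ k), mul_assoc]
  have main : ∀ Z : Matrix (Fin p) (Fin p) ℂ,
      (Z * A * Z = Z ∧ Z * A = D * A ∧ A ^ k * Z = A ^ k * P) → Z = D * A * P := by
    rintro Z ⟨h1, h2, h3⟩
    calc Z = Z * A * Z := h1.symm
      _ = D * A * Z := by rw [h2]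
      _ = D ^ (k + 1) * A ^ k * A * Z := by rw [key]
      _ = D ^ (k + 1) * A * (A ^ k * Z) := swap Z
      _ = D ^ (k + 1) * A * (A ^ k * P) := by rw [h3]
      _ = D ^ (k + 1) * A ^ k * A * P := (swap P).symm
      _ = D * A * P := by rw [key]
  exact ⟨(main X hX).trans (main Y hY).symm, main X hX⟩
end

section
/- Let A be an n×n complex matrix with index k. Then X = A† A A^d satisfies: XAX = X, AX = A A^d, and X A^k = A† A^k. -/
open Matrix

theorem mpd_props {p : ℕ} (A D P : Matrix (Fin p) (Fin p) ℂ) (k : ℕ)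
    (hk : IsIndex A k) (hD : IsDrazin A k D) (hP : IsMP A P) :
    (P * A * D) * A * (P * A * D) = P * A * D ∧
    A * (P * A * D) = A * D ∧
    (P * A * D) * A ^ k = P * A ^ k := by
  obtain ⟨hPA, -, -, -⟩ := hP
  obtain ⟨hDk, hDAD, hc⟩ := hD
  have hck : A ^ k * D = D * A ^ k := (Commute.pow_left (hc : Commute A D) k).eq
  refine ⟨?_, ?_, ?_⟩
  · calc P * A * D * A * (P * A * D)
        = P * A * (D * (A * P * A) * D) := by noncomm_ring
      _ = P * A * (D * A * D) := by rw [hPA]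
      _ = P * A * D := by rw [hDAD]
  · calc A * (P * A * D) = A * P * A * D := by noncomm_ring
      _ = A * D := by rw [hPA]
  · calc P * A * D * A ^ k = P * (A * (A ^ k * D)) := by rw [hck]; noncomm_ring
      _ = P * (A ^ (k + 1) * D) := by rw [pow_succ']; noncomm_ring
      _ = P * A ^ k := by rw [hDk]
end

section
/- Let A ∈ ℂ^{m×n}, W ∈ ℂ^{n×m} nonzero, k = max{Ind(WA), Ind(AW)}, and A^{d,W} the W-weighted Drazin inverse. Then X = A† A W A^{d,W} W satisfies: XAX = X, AX = A W A^{d,W} W, and X (AW)^{k+1} = A† (AW)^{k+1}. -/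
open Matrix

theorem wmpd_props {m n : ℕ} (A Dw : Matrix (Fin m) (Fin n) ℂ)
    (W : Matrix (Fin n) (Fin m) ℂ) (P : Matrix (Fin n) (Fin m) ℂ) (kWA kAW k : ℕ)
    (hW : W ≠ 0)
    (hkWA : IsIndex (W * A) kWA) (hkAW : IsIndex (A * W) kAW)
    (hk : k = max kWA kAW)
    (hDw : IsWDrazin A W k Dw) (hP : IsMP A P) :
    (P * A * W * Dw * W) * A * (P * A * W * Dw * W) = P * A * W * Dw * W ∧
    A * (P * A * W * Dw * W) = A * W * Dw * W ∧
    (P * A * W * Dw * W) * (A * W) ^ (k + 1) = P * (A * W) ^ (k + 1) := by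
  obtain ⟨h1, h2, h3⟩ := hDw
  obtain ⟨hp1, _, _, _⟩ := hP
  have hc : Commute (A * W) (Dw * W) := by
    show (A * W) * (Dw * W) = (Dw * W) * (A * W)
    calc (A * W) * (Dw * W) = (A * W * Dw) * W := by simp only [Matrix.mul_assoc]
    _ = (Dw * W * A) * W := by rw [h3]
    _ = (Dw * W) * (A * W) := by simp only [Matrix.mul_assoc]
  refine ⟨?_, ?_, ?_⟩
  · calc (P * A * W * Dw * W) * A * (P * A * W * Dw * W)
        = P * A * W * (Dw * W * (A * P * A) * W * Dw) * W := by
          simp only [Matrix.mul_assoc]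
    _ = P * A * W * (Dw * W * A * W * Dw) * W := by
          rw [show A * P * A = A from hp1]
    _ = P * A * W * Dw * W := by rw [h2]
  · calc A * (P * A * W * Dw * W) = (A * P * A) * W * Dw * W := by
          simp only [Matrix.mul_assoc]
    _ = A * W * Dw * W := by rw [hp1]
  · have hck : (Dw * W) * (A * W) ^ (k + 1) = (A * W) ^ (k + 1) * (Dw * W) :=
      (hc.symm.pow_right (k + 1)).eq
    calc (P * A * W * Dw * W) * (A * W) ^ (k + 1)
        = P * ((A * W) * ((Dw * W) * (A * W) ^ (k + 1))) := by
          simp only [Matrix.mul_assoc]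
    _ = P * ((A * W) * ((A * W) ^ (k + 1) * (Dw * W))) := by rw [hck]
    _ = P * ((A * W) * ((A * W) ^ (k + 1) * Dw * W)) := by simp only [Matrix.mul_assoc]
    _ = P * ((A * W) * (A * W) ^ k) := by rw [h1]
    _ = P * (A * W) ^ (k + 1) := by rw [← pow_succ']
end

section
/- Let A ∈ ℂ^{m×n}, W ∈ ℂ^{n×m} nonzero, k = max{Ind(WA), Ind(AW)}. If X₁ and X₂ both satisfy XAX = X, AX = A W A^{d,W} W, and X (AW)^{k+1} = A† (AW)^{k+1}, then X₁ = X₂. -/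
open Matrix

theorem wmpd_unique {m n : ℕ} (A Dw : Matrix (Fin m) (Fin n) ℂ)
    (W : Matrix (Fin n) (Fin m) ℂ) (P X₁ X₂ : Matrix (Fin n) (Fin m) ℂ) (kWA kAW k : ℕ)
    (hW : W ≠ 0)
    (hkWA : IsIndex (W * A) kWA) (hkAW : IsIndex (A * W) kAW)
    (hk : k = max kWA kAW)
    (hDw : IsWDrazin A W k Dw) (hP : IsMP A P)
    (hX₁ : X₁ * A * X₁ = X₁ ∧ A * X₁ = A * W * Dw * W ∧
      X₁ * (A * W) ^ (k + 1) = P * (A * W) ^ (k + 1))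
    (hX₂ : X₂ * A * X₂ = X₂ ∧ A * X₂ = A * W * Dw * W ∧
      X₂ * (A * W) ^ (k + 1) = P * (A * W) ^ (k + 1)) : X₁ = X₂ := by
  obtain ⟨h1, h2, h3⟩ := hX₁
  obtain ⟨h4, h5, h6⟩ := hX₂
  obtain ⟨hd1, hd2, hd3⟩ := hDw
  have hcomm : (A * W) * (Dw * W) = (Dw * W) * (A * W) := by
    calc (A * W) * (Dw * W) = A * W * Dw * W := by simp only [Matrix.mul_assoc]
    _ = Dw * W * A * W := by rw [hd3]
    _ = (Dw * W) * (A * W) := by simp only [Matrix.mul_assoc]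
  have hDBD : Dw * W * ((A * W) * (Dw * W)) = Dw * W := by
    calc Dw * W * ((A * W) * (Dw * W)) = (Dw * W * A * W * Dw) * W := by
          simp only [Matrix.mul_assoc]
    _ = Dw * W := by rw [hd2]
  have hidem : ((A * W) * (Dw * W)) * ((A * W) * (Dw * W)) = (A * W) * (Dw * W) := by
    calc ((A * W) * (Dw * W)) * ((A * W) * (Dw * W))
        = (A * W) * (Dw * W * ((A * W) * (Dw * W))) := by simp only [Matrix.mul_assoc]
    _ = (A * W) * (Dw * W) := by rw [hDBD]
  have hpow : ∀ j : ℕ, ((A * W) * (Dw * W)) ^ (j + 1) = (A * W) * (Dw * W) := by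
    intro j
    induction j with
    | zero => simp
    | succ i ih => rw [pow_succ, ih, hidem]
  have hmulpow : ((A * W) * (Dw * W)) ^ (k + 1) = (A * W) ^ (k + 1) * (Dw * W) ^ (k + 1) :=
    Commute.mul_pow hcomm _
  have key : ∀ X : Matrix (Fin n) (Fin m) ℂ,
      X * A * X = X → A * X = A * W * Dw * W →
      X * (A * W) ^ (k + 1) = P * (A * W) ^ (k + 1) →
      X = P * (A * W) ^ (k + 1) * (Dw * W) ^ (k + 1) := by
    intro X hXa hXb hXc
    have hAX : A * X = (A * W) * (Dw * W) := by rw [hXb]; simp only [Matrix.mul_assoc]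
    calc X = X * A * X := hXa.symm
    _ = X * ((A * W) * (Dw * W)) := by rw [Matrix.mul_assoc, hAX]
    _ = X * ((A * W) ^ (k + 1) * (Dw * W) ^ (k + 1)) := by rw [← hmulpow, hpow]
    _ = X * (A * W) ^ (k + 1) * (Dw * W) ^ (k + 1) := (Matrix.mul_assoc _ _ _).symm
    _ = P * (A * W) ^ (k + 1) * (Dw * W) ^ (k + 1) := by rw [hXc]
  rw [key X₁ h1 h2 h3, key X₂ h4 h5 h6]
end

section
/- Let A ∈ ℂ^{m×n}, W ∈ ℂ^{n×m} nonzero, with W-weighted Drazin inverse A^{d,W} and Moore-Penrose inverse A†. Then X = A† A W A^{d,W} W A A† satisfies: XAX = X, AX = A W A^{d,W} W A A†, and XA = A† A W A^{d,W} W A; moreover X is the unique matrix satisfying these three equations. -/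
open Matrix

/-!
With `G = W A^{d,W} W`, the equation `A^{d,W} W A W A^{d,W} = A^{d,W}` makes `G` an outer inverse
of `A`: `G A G = G`. For any inner inverse `P` (`A P A = A`) and outer inverse `G` the matrix
`X = P A G A P` satisfies `X A = P A G A` and `A X = A G A P`, so
`X A X = P A G (A P A) G A P = P A (G A G) A P = X`; and any `Y` with the same three properties is
`Y = Y A Y = P A G (A Y) = P A G (A G A P) = X`.
-/

namespace Matrix

variable {l m α : Type*} [Fintype l] [Fintype m] [NonUnitalSemiring α]

/-- For `P = A†` and `G = A^D` this is the CMP inverse `A† A A^D A A†`. -/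
def cmpInverse (P : Matrix m l α) (A : Matrix l m α) (G : Matrix m l α) : Matrix m l α :=
  P * A * G * A * P

variable {A : Matrix l m α} {P G : Matrix m l α}

theorem mul_cmpInverse (hP : A * P * A = A) : A * cmpInverse P A G = A * G * A * P := by
  simp only [cmpInverse, ← Matrix.mul_assoc, hP]

theorem cmpInverse_mul (hP : A * P * A = A) : cmpInverse P A G * A = P * A * G * A := by
  calc cmpInverse P A G * A = P * A * G * (A * P * A) := by
        simp only [cmpInverse, Matrix.mul_assoc]
    _ = P * A * G * A := by rw [hP]

theorem cmpInverse_mul_cmpInverse (hP : A * P * A = A) (hG : G * A * G = G) :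
    cmpInverse P A G * A * cmpInverse P A G = cmpInverse P A G := by
  calc cmpInverse P A G * A * cmpInverse P A G = P * A * G * (A * cmpInverse P A G) := by
        rw [cmpInverse_mul hP]; simp only [Matrix.mul_assoc]
    _ = P * A * (G * A * G) * A * P := by
        rw [mul_cmpInverse hP]; simp only [Matrix.mul_assoc]
    _ = cmpInverse P A G := by rw [hG, cmpInverse]

theorem eq_cmpInverse_of_mul_eq (hG : G * A * G = G) {Y : Matrix m l α} (hY : Y * A * Y = Y)
    (hAY : A * Y = A * G * A * P) (hYA : Y * A = P * A * G * A) : Y = cmpInverse P A G :=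
  calc Y = P * A * G * (A * Y) := by rw [← Matrix.mul_assoc, ← hYA, hY]
    _ = P * A * (G * A * G) * A * P := by rw [hAY]; simp only [Matrix.mul_assoc]
    _ = cmpInverse P A G := by rw [hG, cmpInverse]

end Matrix

theorem IsWDrazin.outer_inverse {m n k : ℕ} {A Dw : Matrix (Fin m) (Fin n) ℂ}
    {W : Matrix (Fin n) (Fin m) ℂ} (hDw : IsWDrazin A W k Dw) :
    W * Dw * W * A * (W * Dw * W) = W * Dw * W :=
  calc W * Dw * W * A * (W * Dw * W) = W * (Dw * W * A * W * Dw) * W := by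
        simp only [Matrix.mul_assoc]
    _ = W * Dw * W := by rw [hDw.2.1]

theorem wcmp_props_general {m n : ℕ} (A Dw : Matrix (Fin m) (Fin n) ℂ)
    (W : Matrix (Fin n) (Fin m) ℂ) (P : Matrix (Fin n) (Fin m) ℂ) (k : ℕ)
    (hDw : IsWDrazin A W k Dw) (hP : IsMP A P) :
    ((P * A * W * Dw * W * A * P) * A * (P * A * W * Dw * W * A * P) =
        P * A * W * Dw * W * A * P ∧
      A * (P * A * W * Dw * W * A * P) = A * W * Dw * W * A * P ∧
      (P * A * W * Dw * W * A * P) * A = P * A * W * Dw * W * A) ∧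
    ∀ Y : Matrix (Fin n) (Fin m) ℂ,
      (Y * A * Y = Y ∧ A * Y = A * W * Dw * W * A * P ∧
        Y * A = P * A * W * Dw * W * A) →
      Y = P * A * W * Dw * W * A * P := by
  have hX : P * A * W * Dw * W * A * P = cmpInverse P A (W * Dw * W) := by
    simp only [cmpInverse, Matrix.mul_assoc]
  have hAX : A * W * Dw * W * A * P = A * (W * Dw * W) * A * P := by
    simp only [Matrix.mul_assoc]
  have hXA : P * A * W * Dw * W * A = P * A * (W * Dw * W) * A := by
    simp only [Matrix.mul_assoc]
  rw [hX, hAX, hXA]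
  exact ⟨⟨cmpInverse_mul_cmpInverse hP.1 hDw.outer_inverse, mul_cmpInverse hP.1,
    cmpInverse_mul hP.1⟩,
    fun Y ⟨hY, hAY, hYA⟩ => eq_cmpInverse_of_mul_eq hDw.outer_inverse hY hAY hYA⟩

theorem wcmp_props {m n : ℕ} (A Dw : Matrix (Fin m) (Fin n) ℂ)
    (W : Matrix (Fin n) (Fin m) ℂ) (P : Matrix (Fin n) (Fin m) ℂ) (kWA kAW k : ℕ)
    (hW : W ≠ 0)
    (hkWA : IsIndex (W * A) kWA) (hkAW : IsIndex (A * W) kAW)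
    (hk : k = max kWA kAW)
    (hDw : IsWDrazin A W k Dw) (hP : IsMP A P) :
    ((P * A * W * Dw * W * A * P) * A * (P * A * W * Dw * W * A * P) =
        P * A * W * Dw * W * A * P ∧
      A * (P * A * W * Dw * W * A * P) = A * W * Dw * W * A * P ∧
      (P * A * W * Dw * W * A * P) * A = P * A * W * Dw * W * A) ∧
    ∀ Y : Matrix (Fin n) (Fin m) ℂ,
      (Y * A * Y = Y ∧ A * Y = A * W * Dw * W * A * P ∧
        Y * A = P * A * W * Dw * W * A) →
      Y = P * A * W * Dw * W * A * P :=
  wcmp_props_general A Dw W P k hDw hP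
end

section
/- Let A ∈ ℂ^{m×n}, W ∈ ℂ^{n×m} nonzero, k = max{Ind(WA), Ind(AW)}. The W-weighted DMP inverse X = W A^{d,W} W A A† satisfies: XAX = X, XA = W A^{d,W} W A, and (WA)^{k+1} X = (WA)^{k+1} A†, and it is the unique matrix satisfying this system. -/
open Matrix

theorem wdmp_props {m n : ℕ} (A Dw : Matrix (Fin m) (Fin n) ℂ)
    (W : Matrix (Fin n) (Fin m) ℂ) (P : Matrix (Fin n) (Fin m) ℂ) (kWA kAW k : ℕ)
    (hW : W ≠ 0)
    (hkWA : IsIndex (W * A) kWA) (hkAW : IsIndex (A * W) kAW)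
    (hk : k = max kWA kAW)
    (hDw : IsWDrazin A W k Dw) (hP : IsMP A P) :
    ((W * Dw * W * A * P) * A * (W * Dw * W * A * P) = W * Dw * W * A * P ∧
      (W * Dw * W * A * P) * A = W * Dw * W * A ∧
      (W * A) ^ (k + 1) * (W * Dw * W * A * P) = (W * A) ^ (k + 1) * P) ∧
    ∀ Y : Matrix (Fin n) (Fin m) ℂ,
      (Y * A * Y = Y ∧ Y * A = W * Dw * W * A ∧
        (W * A) ^ (k + 1) * Y = (W * A) ^ (k + 1) * P) →
      Y = W * Dw * W * A * P := by
  obtain ⟨h1, h2, h3⟩ := hDw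
  obtain ⟨hP1, hP2, hP3, hP4⟩ := hP
  have h2' : Dw * (W * (A * (W * Dw))) = Dw := by
    simpa only [Matrix.mul_assoc] using h2
  have h3' : A * (W * Dw) = Dw * (W * A) := by
    simpa only [Matrix.mul_assoc] using h3
  have h1' : (A * W) ^ (k + 1) * (Dw * W) = (A * W) ^ k := by
    simpa only [Matrix.mul_assoc] using h1
  have commW : ∀ j : ℕ, (W * A) ^ j * W = W * (A * W) ^ j := by
    intro j
    induction j with
    | zero => simp
    | succ j ih =>
      calc (W * A) ^ (j + 1) * W = (W * A) ^ j * W * (A * W) := by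
            rw [pow_succ]; simp only [Matrix.mul_assoc]
        _ = W * (A * W) ^ j * (A * W) := by rw [ih]
        _ = W * (A * W) ^ (j + 1) := by rw [pow_succ, Matrix.mul_assoc]
  have hXA : W * Dw * W * A * P * A = W * Dw * W * A := by
    calc W * Dw * W * A * P * A = W * Dw * W * (A * P * A) := by
          simp only [Matrix.mul_assoc]
      _ = W * Dw * W * A := by rw [hP1]
  have hkey : ∀ j : ℕ, (Dw * W) ^ j * Dw * (W * A) ^ j = Dw := by
    intro j
    induction j with
    | zero => simp
    | succ j ih =>
      have step : Dw * (W * (Dw * (W * A))) = Dw := by rw [← h3', h2']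
      calc (Dw * W) ^ (j + 1) * Dw * (W * A) ^ (j + 1)
          = (Dw * W) ^ j * (Dw * (W * (Dw * (W * A)))) * (W * A) ^ j := by
            rw [pow_succ, pow_succ']; simp only [Matrix.mul_assoc]
        _ = (Dw * W) ^ j * Dw * (W * A) ^ j := by rw [step]
        _ = Dw := ih
  have h3rd : (W * A) ^ (k + 1) * (W * Dw * W * A * P) = (W * A) ^ (k + 1) * P := by
    calc (W * A) ^ (k + 1) * (W * Dw * W * A * P)
        = (W * A) ^ (k + 1) * W * (Dw * W) * (A * P) := by
          simp only [Matrix.mul_assoc]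
      _ = W * (A * W) ^ (k + 1) * (Dw * W) * (A * P) := by rw [commW]
      _ = W * ((A * W) ^ (k + 1) * (Dw * W)) * (A * P) := by
          rw [Matrix.mul_assoc W]
      _ = W * (A * W) ^ k * (A * P) := by rw [h1']
      _ = (W * A) ^ k * W * (A * P) := by rw [← commW]
      _ = (W * A) ^ (k + 1) * P := by rw [pow_succ]; simp only [Matrix.mul_assoc]
  have hX' : W * Dw * W * A * (W * Dw * W * A * P) = W * Dw * W * A * P := by
    calc W * Dw * W * A * (W * Dw * W * A * P)
        = W * (Dw * (W * (A * (W * Dw)))) * W * A * P := by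
          simp only [Matrix.mul_assoc]
      _ = W * Dw * W * A * P := by rw [h2']
  have hexp : W * Dw * W * A = W * (Dw * W) ^ k * Dw * (W * A) ^ (k + 1) := by
    conv_lhs => rw [← hkey k]
    rw [pow_succ]
    simp only [Matrix.mul_assoc]
  refine ⟨⟨?_, hXA, h3rd⟩, ?_⟩
  · rw [hXA]; exact hX'
  · rintro Y ⟨hY1, hY2, hY3⟩
    calc Y = Y * A * Y := hY1.symm
      _ = W * Dw * W * A * Y := by rw [hY2]
      _ = W * (Dw * W) ^ k * Dw * ((W * A) ^ (k + 1) * Y) := by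
          rw [hexp, Matrix.mul_assoc]
      _ = W * (Dw * W) ^ k * Dw * ((W * A) ^ (k + 1) * P) := by rw [hY3]
      _ = W * (Dw * W) ^ k * Dw * ((W * A) ^ (k + 1) * (W * Dw * W * A * P)) := by
          rw [h3rd]
      _ = W * Dw * W * A * (W * Dw * W * A * P) := by
          conv_lhs => rw [← Matrix.mul_assoc, ← hexp]
      _ = W * Dw * W * A * P := hX'
end
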